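/- Fix real weights with 0 < w_b, 0 < w_f and w_b + w_f < 1. Then the Collatz conjecture (for every positive integer k there exists i ≥ 0 with Col^[i](k) = 1) holds if and only if for every positive integer k and every solution f of the Collatz functional equation for (k, w_b, w_f), the coefficient a₁ of f is nonzero. -/

import Mathlib

/-!
With orbit weights `Wᵢ = ∏_{t<i} w(Colᵗ k)`, where `w(n)` is `w_f` for odd `n` and `w_b` for even `n`,
the series `F(x) = ∑ᵢ Wᵢ x^(Colⁱ k)` is a bounded solution: the right-hand side of the equation
sends the monomial `xⁿ` to `2 w(n) (x²)^(Col n)`, so the equation just shifts the orbit by one step,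
and the term `2 x^(2k)` accounts for `i = 0`. The difference of two bounded solutions satisfies the
homogeneous equation, which multiplies any bound on the disc by `|w_b| + |w_f| < 1`, so bounded
solutions are unique. Hence `a₁ = ∑_{Colⁱ k = 1} Wᵢ`, a sum of positive terms that is nonzero exactly
when the orbit of `k` reaches `1`.
-/

/-- The open unit disc in `ℂ`. -/
def openUnitDisc : Set ℂ := {z : ℂ | ‖z‖ < 1}

/-- `f` is a solution of the Collatz functional equation for `(k, wb, wf)`:
it is analytic and bounded on the open unit disc and satisfies the functional equation
`2 f(x²) = wb (f(x) + f(−x)) + wf x² (f(x⁶) − f(−x⁶)) + 2 x^(2k)` there. -/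
def IsSolution (k : ℕ) (wb wf : ℝ) (f : ℂ → ℂ) : Prop :=
  AnalyticOnNhd ℂ f openUnitDisc ∧
  (∃ C : ℝ, ∀ z ∈ openUnitDisc, ‖f z‖ ≤ C) ∧
  ∀ x : ℂ, ‖x‖ < 1 →
    2 * f (x ^ 2) =
      (wb : ℂ) * (f x + f (-x)) + (wf : ℂ) * x ^ 2 * (f (x ^ 6) - f (-x ^ 6)) +
        2 * x ^ (2 * k)

/-- `a` is the sequence of Taylor coefficients of `f` at `0`:
`f x = Σ aₙ xⁿ` on the open unit disc. -/
def HasCoeffs (f : ℂ → ℂ) (a : ℕ → ℂ) : Prop :=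
  ∀ x : ℂ, ‖x‖ < 1 → HasSum (fun n => a n * x ^ n) (f x)

/-- The Collatz map: `3n+1` on odd numbers, `n/2` on even numbers. -/
def Col (n : ℕ) : ℕ := if n % 2 = 1 then 3 * n + 1 else n / 2

open Finset Filter Topology

section MonomialSeries

variable {ι : Type*} {c : ι → ℂ} {e : ι → ℕ}

lemma summable_mul_pow (hc : Summable fun i => ‖c i‖) {x : ℂ} (hx : ‖x‖ ≤ 1) :
    Summable fun i => c i * x ^ e i :=
  Summable.of_norm_bounded hc fun i => by
    rw [norm_mul, norm_pow]
    exact mul_le_of_le_one_right (norm_nonneg _) (pow_le_one₀ (norm_nonneg _) hx)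

lemma norm_tsum_mul_pow_le (hc : Summable fun i => ‖c i‖) {x : ℂ} (hx : ‖x‖ ≤ 1) :
    ‖∑' i, c i * x ^ e i‖ ≤ ∑' i, ‖c i‖ := by
  refine (norm_tsum_le_tsum_norm (summable_mul_pow hc hx).norm).trans ?_
  refine Summable.tsum_le_tsum (fun i => ?_) (summable_mul_pow hc hx).norm hc
  rw [norm_mul, norm_pow]
  exact mul_le_of_le_one_right (norm_nonneg _) (pow_le_one₀ (norm_nonneg _) hx)

lemma hasCoeffs_tsum_mul_pow (hc : Summable fun i => ‖c i‖) :
    HasCoeffs (fun x => ∑' i, c i * x ^ e i) (fun n => ∑' i : e ⁻¹' {n}, c i) := by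
  intro x hx
  refine ((summable_mul_pow hc hx.le).hasSum.tsum_fiberwise e).congr_fun fun n => ?_
  rw [← tsum_mul_right]
  refine tsum_congr fun i => ?_
  rw [show e i = n from i.2]

end MonomialSeries

section PowerSeries

lemma mem_eball_zero_one_iff {E : Type*} [SeminormedAddGroup E] {y : E} :
    y ∈ Metric.eball (0 : E) 1 ↔ ‖y‖ < 1 := by
  rw [mem_eball_zero_iff, ← ofReal_norm, ENNReal.ofReal_lt_one]

variable {f : ℂ → ℂ} {a : ℕ → ℂ}

lemma HasCoeffs.hasFPowerSeriesOnBall (h : HasCoeffs f a) :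
    HasFPowerSeriesOnBall f (FormalMultilinearSeries.ofScalars ℂ a) 0 1 where
  r_le := ENNReal.le_of_forall_nnreal_lt fun r hr => by
    have hr1 : ‖((r : ℝ) : ℂ)‖ < 1 := by simpa using hr
    refine (FormalMultilinearSeries.ofScalars ℂ a).le_radius_of_tendsto (l := 0) ?_
    simpa [FormalMultilinearSeries.ofScalars_norm] using
      (h _ hr1).summable.tendsto_atTop_zero.norm
  r_pos := one_pos
  hasSum {y} hy := by
    simpa [FormalMultilinearSeries.ofScalars_apply_eq, mul_comm] using
      h y (mem_eball_zero_one_iff.mp hy)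

lemma HasCoeffs.analyticOnNhd (h : HasCoeffs f a) : AnalyticOnNhd ℂ f openUnitDisc :=
  fun _ hz => h.hasFPowerSeriesOnBall.analyticAt_of_mem (mem_eball_zero_one_iff.mpr hz)

lemma HasCoeffs.unique {b : ℕ → ℂ} (ha : HasCoeffs f a) (hb : HasCoeffs f b) : a = b :=
  FormalMultilinearSeries.ofScalars_series_injective ℂ ℂ <|
    ha.hasFPowerSeriesOnBall.hasFPowerSeriesAt.eq_formalMultilinearSeries
      hb.hasFPowerSeriesOnBall.hasFPowerSeriesAt

end PowerSeries

section Uniqueness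

variable {wb wf : ℝ} {d : ℂ → ℂ}

-- Every point of the disc is the square of a point of the disc.
lemma norm_le_mul_of_functional_eq (hd : ∀ x : ℂ, ‖x‖ < 1 →
      2 * d (x ^ 2) = wb * (d x + d (-x)) + wf * x ^ 2 * (d (x ^ 6) - d (-x ^ 6)))
    {C : ℝ} (hC : ∀ z : ℂ, ‖z‖ < 1 → ‖d z‖ ≤ C) {y : ℂ} (hy : ‖y‖ < 1) :
    ‖d y‖ ≤ (|wb| + |wf|) * C := by
  obtain ⟨x, rfl⟩ := IsAlgClosed.exists_pow_nat_eq y two_pos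
  have hx2 : ‖x‖ ^ 2 < 1 := by rwa [← norm_pow]
  have hx : ‖x‖ < 1 := (pow_lt_one_iff_of_nonneg (norm_nonneg x) two_ne_zero).mp hx2
  have hx6 : ‖x ^ 6‖ < 1 := by
    rw [norm_pow]; exact pow_lt_one₀ (norm_nonneg x) hx (by norm_num)
  have hsum : ‖d x + d (-x)‖ ≤ 2 * C := by
    linarith [norm_add_le (d x) (d (-x)), hC x hx, hC (-x) (by rwa [norm_neg])]
  have hdiff : ‖d (x ^ 6) - d (-x ^ 6)‖ ≤ 2 * C := by
    linarith [norm_sub_le (d (x ^ 6)) (d (-x ^ 6)), hC _ hx6, hC (-x ^ 6) (by rwa [norm_neg])]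
  have h2 : ‖(2 : ℂ) * d (x ^ 2)‖ ≤ |wb| * (2 * C) + |wf| * (2 * C) := by
    rw [hd x hx]
    refine (norm_add_le _ _).trans (add_le_add ?_ ?_)
    · rw [norm_mul, Complex.norm_real, Real.norm_eq_abs]
      exact mul_le_mul_of_nonneg_left hsum (abs_nonneg wb)
    · rw [norm_mul, norm_mul, Complex.norm_real, Real.norm_eq_abs, norm_pow]
      calc |wf| * ‖x‖ ^ 2 * ‖d (x ^ 6) - d (-x ^ 6)‖ ≤ |wf| * 1 * (2 * C) := by
            gcongr
        _ = |wf| * (2 * C) := by rw [mul_one]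
  rw [norm_mul, Complex.norm_ofNat] at h2
  linarith

lemma eq_zero_of_bounded_of_functional_eq (hw : |wb| + |wf| < 1)
    (hd : ∀ x : ℂ, ‖x‖ < 1 →
      2 * d (x ^ 2) = wb * (d x + d (-x)) + wf * x ^ 2 * (d (x ^ 6) - d (-x ^ 6)))
    (hbdd : ∃ C : ℝ, ∀ z : ℂ, ‖z‖ < 1 → ‖d z‖ ≤ C) {z : ℂ} (hz : ‖z‖ < 1) : d z = 0 := by
  obtain ⟨C, hC⟩ := hbdd
  have hpow (n : ℕ) : ∀ y : ℂ, ‖y‖ < 1 → ‖d y‖ ≤ (|wb| + |wf|) ^ n * C := by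
    induction n with
    | zero => simpa using hC
    | succ n ih =>
      intro y hy
      rw [pow_succ', mul_assoc]
      exact norm_le_mul_of_functional_eq hd ih hy
  have hlim : Tendsto (fun n => (|wb| + |wf|) ^ n * C) atTop (𝓝 0) := by
    simpa using (tendsto_pow_atTop_nhds_zero_of_lt_one (by positivity) hw).mul_const C
  exact norm_le_zero_iff.mp (ge_of_tendsto' hlim fun n => hpow n z hz)

lemma eqOn_of_isSolution {k : ℕ} (hw : |wb| + |wf| < 1) {f g : ℂ → ℂ}
    (hf : IsSolution k wb wf f) (hg : IsSolution k wb wf g) : Set.EqOn f g openUnitDisc := by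
  obtain ⟨-, ⟨Cf, hCf⟩, hfe⟩ := hf
  obtain ⟨-, ⟨Cg, hCg⟩, hge⟩ := hg
  intro z hz
  refine sub_eq_zero.mp (eq_zero_of_bounded_of_functional_eq (d := f - g) hw
    (fun x hx => ?_) ⟨Cf + Cg, fun y hy => ?_⟩ hz)
  · simp only [Pi.sub_apply]
    linear_combination hfe x hx - hge x hx
  · exact (norm_sub_le _ _).trans (add_le_add (hCf y hy) (hCg y hy))

end Uniqueness

noncomputable section CollatzSeries

def collatzStepWeight (wb wf : ℝ) (n : ℕ) : ℝ := if n % 2 = 1 then wf else wb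

def orbitWeight (wb wf : ℝ) (k i : ℕ) : ℝ :=
  ∏ t ∈ range i, collatzStepWeight wb wf (Col^[t] k)

def collatzSeries (wb wf : ℝ) (k : ℕ) (x : ℂ) : ℂ :=
  ∑' i, (orbitWeight wb wf k i : ℂ) * x ^ Col^[i] k

def collatzCoeff (wb wf : ℝ) (k n : ℕ) : ℂ :=
  ∑' i : (fun i => Col^[i] k) ⁻¹' {n}, (orbitWeight wb wf k i : ℂ)

-- For even `n` the `x⁶` terms cancel, for odd `n` the `x` terms do.
lemma collatz_monomial_identity (wb wf : ℝ) (n : ℕ) (x : ℂ) :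
    wb * (x ^ n + (-x) ^ n) + wf * x ^ 2 * ((x ^ 6) ^ n - (-x ^ 6) ^ n) =
      2 * collatzStepWeight wb wf n * (x ^ 2) ^ Col n := by
  rcases Nat.even_or_odd n with hn | hn
  · have hmod : n % 2 ≠ 1 := by rw [Nat.even_iff.mp hn]; decide
    have hpow : (x ^ 2) ^ (n / 2) = x ^ n := by rw [← pow_mul, Nat.mul_div_cancel' hn.two_dvd]
    simp only [Col, collatzStepWeight, if_neg hmod, hn.neg_pow, hpow]
    ring
  · have hmod : n % 2 = 1 := Nat.odd_iff.mp hn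
    simp only [Col, collatzStepWeight, if_pos hmod, hn.neg_pow]
    ring

variable {wb wf : ℝ} {k : ℕ}

lemma orbitWeight_succ (i : ℕ) :
    orbitWeight wb wf k (i + 1) = orbitWeight wb wf k i * collatzStepWeight wb wf (Col^[i] k) :=
  prod_range_succ _ _

lemma abs_collatzStepWeight_le (n : ℕ) : |collatzStepWeight wb wf n| ≤ max |wb| |wf| := by
  unfold collatzStepWeight
  split_ifs
  exacts [le_max_right _ _, le_max_left _ _]

lemma abs_orbitWeight_le (i : ℕ) : |orbitWeight wb wf k i| ≤ max |wb| |wf| ^ i :=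
  calc |orbitWeight wb wf k i| = ∏ t ∈ range i, |collatzStepWeight wb wf (Col^[t] k)| :=
        abs_prod _ _
    _ ≤ ∏ _t ∈ range i, max |wb| |wf| :=
        prod_le_prod (fun _ _ => abs_nonneg _) fun _ _ => abs_collatzStepWeight_le _
    _ = max |wb| |wf| ^ i := by rw [prod_const, card_range]

lemma summable_norm_orbitWeight (hwb : |wb| < 1) (hwf : |wf| < 1) :
    Summable fun i => ‖(orbitWeight wb wf k i : ℂ)‖ := by
  simp only [Complex.norm_real, Real.norm_eq_abs]
  exact Summable.of_nonneg_of_le (fun _ => abs_nonneg _) abs_orbitWeight_le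
    (summable_geometric_of_lt_one (by positivity) (max_lt hwb hwf))

lemma collatzSeries_functional_eq (hwb : |wb| < 1) (hwf : |wf| < 1) {x : ℂ} (hx : ‖x‖ < 1) :
    2 * collatzSeries wb wf k (x ^ 2) =
      wb * (collatzSeries wb wf k x + collatzSeries wb wf k (-x)) +
        wf * x ^ 2 * (collatzSeries wb wf k (x ^ 6) - collatzSeries wb wf k (-x ^ 6)) +
        2 * x ^ (2 * k) := by
  set W : ℕ → ℂ := fun i => (orbitWeight wb wf k i : ℂ)
  have hsum {y : ℂ} (hy : ‖y‖ ≤ 1) :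
      HasSum (fun i => W i * y ^ Col^[i] k) (collatzSeries wb wf k y) :=
    (summable_mul_pow (summable_norm_orbitWeight hwb hwf) hy).hasSum
  have hx6 : ‖x ^ 6‖ ≤ 1 := by rw [norm_pow]; exact pow_le_one₀ (norm_nonneg x) hx.le
  have hx2 : ‖x ^ 2‖ ≤ 1 := by rw [norm_pow]; exact pow_le_one₀ (norm_nonneg x) hx.le
  have hrhs := ((hsum hx.le).add (hsum (norm_neg x ▸ hx.le))).mul_left (wb : ℂ) |>.add <|
    ((hsum hx6).sub (hsum (norm_neg (x ^ 6) ▸ hx6))).mul_left ((wf : ℂ) * x ^ 2)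
  have hshift := (hasSum_nat_add_iff' 1).mpr ((hsum hx2).mul_left 2)
  have hterm (i : ℕ) : (wb : ℂ) * (W i * x ^ Col^[i] k + W i * (-x) ^ Col^[i] k) +
      wf * x ^ 2 * (W i * (x ^ 6) ^ Col^[i] k - W i * (-x ^ 6) ^ Col^[i] k) =
      2 * (W (i + 1) * (x ^ 2) ^ Col^[i + 1] k) := by
    simp only [W, Function.iterate_succ_apply', orbitWeight_succ, Complex.ofReal_mul]
    linear_combination (W i) * collatz_monomial_identity wb wf (Col^[i] k) x
  simp only [hterm] at hrhs
  rw [hrhs.unique hshift]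
  simp [W, orbitWeight, ← pow_mul]

lemma hasCoeffs_collatzSeries (hwb : |wb| < 1) (hwf : |wf| < 1) :
    HasCoeffs (collatzSeries wb wf k) (collatzCoeff wb wf k) :=
  hasCoeffs_tsum_mul_pow (summable_norm_orbitWeight hwb hwf)

lemma isSolution_collatzSeries (hwb : |wb| < 1) (hwf : |wf| < 1) :
    IsSolution k wb wf (collatzSeries wb wf k) :=
  ⟨(hasCoeffs_collatzSeries hwb hwf).analyticOnNhd,
    ⟨_, fun _ hz => norm_tsum_mul_pow_le (summable_norm_orbitWeight hwb hwf) (le_of_lt hz)⟩,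
    fun _ hx => collatzSeries_functional_eq hwb hwf hx⟩

lemma collatzCoeff_ne_zero_iff (hwb : 0 < wb) (hwf : 0 < wf) (hwb' : wb < 1) (hwf' : wf < 1)
    {n : ℕ} : collatzCoeff wb wf k n ≠ 0 ↔ ∃ i, Col^[i] k = n := by
  have hpos (i : ℕ) : 0 < orbitWeight wb wf k i :=
    prod_pos fun t _ => by unfold collatzStepWeight; split_ifs <;> assumption
  have hsum : Summable (orbitWeight wb wf k) := by
    simpa [abs_of_pos (hpos _)] using
      (summable_norm_orbitWeight (k := k) (abs_lt.mpr ⟨by linarith, hwb'⟩)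
        (abs_lt.mpr ⟨by linarith, hwf'⟩))
  rw [collatzCoeff, ← Complex.ofReal_tsum, Ne, Complex.ofReal_eq_zero]
  constructor
  · intro hne
    by_contra! hnot
    have : IsEmpty ((fun i => Col^[i] k) ⁻¹' {n}) := ⟨fun i => hnot i i.2⟩
    exact hne tsum_empty
  · rintro ⟨i, hi⟩
    exact (Summable.tsum_pos (hsum.subtype _) (fun j => (hpos j.1).le) ⟨i, hi⟩ (hpos i)).ne'

end CollatzSeries

theorem stmt_12 (wb wf : ℝ) (hwb : 0 < wb) (hwf : 0 < wf) (hw : wb + wf < 1) :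
    (∀ k : ℕ, 0 < k → ∃ i : ℕ, Col^[i] k = 1) ↔
      (∀ k : ℕ, 0 < k → ∀ f : ℂ → ℂ, ∀ a : ℕ → ℂ,
        IsSolution k wb wf f → HasCoeffs f a → a 1 ≠ 0) := by
  have hwb1 : |wb| < 1 := by rw [abs_of_pos hwb]; linarith
  have hwf1 : |wf| < 1 := by rw [abs_of_pos hwf]; linarith
  have hcoeff (k : ℕ) : collatzCoeff wb wf k 1 ≠ 0 ↔ ∃ i, Col^[i] k = 1 :=
    collatzCoeff_ne_zero_iff hwb hwf (by linarith) (by linarith)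
  constructor
  · intro hcol k hk f a hf ha
    have hfF : Set.EqOn f (collatzSeries wb wf k) openUnitDisc :=
      eqOn_of_isSolution (by rwa [abs_of_pos hwb, abs_of_pos hwf]) hf
        (isSolution_collatzSeries hwb1 hwf1)
    have hFa : HasCoeffs (collatzSeries wb wf k) a := fun x hx => hfF hx ▸ ha x hx
    rw [hFa.unique (hasCoeffs_collatzSeries hwb1 hwf1), hcoeff]
    exact hcol k hk
  · intro h k hk
    exact (hcoeff k).mp (h k hk _ _ (isSolution_collatzSeries hwb1 hwf1)
      (hasCoeffs_collatzSeries hwb1 hwf1))
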